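/- For every integer n ≥ 1, the inverse of the series Σ_{n≥0} (-1)^n X_{•^n} (where •^n is the forest of n isolated vertices) in the dual noncommutative Connes-Kreimer Hopf algebra equals Σ_{n≥0} Σ_{|F|=n} X_F, the sum over all plane forests of each degree. -/
import Mathlib


/-- Plane trees: a node with an ordered (possibly empty) list of subtrees. -/
inductive PlaneTree : Type
  | node : List PlaneTree → PlaneTree

namespace PlaneTree

mutual
  /-- Number of nodes of a plane tree. -/
  def sizeT : PlaneTree → ℕ
    | .node ts => 1 + sizeF ts
  /-- Number of nodes of a plane forest. -/
  def sizeF : List PlaneTree → ℕ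
    | [] => 0
    | t :: ts => sizeT t + sizeF ts
end

mutual
  /-- All admissible cuts (monotone `{1,2}`-labellings) of a tree, as pairs
  (part labelled 1, part labelled 2).  The label-1 part is downward (descendant) closed. -/
  def cutsT : PlaneTree → List (List PlaneTree × List PlaneTree)
    | .node ts => ([.node ts], []) :: (cutsF ts).map (fun p => (p.1, [.node p.2]))
  /-- All admissible cuts of a forest. -/
  def cutsF : List PlaneTree → List (List PlaneTree × List PlaneTree)
    | [] => [([], [])]
    | t :: ts => (cutsT t).flatMap (fun p => (cutsF ts).map (fun r => (p.1 ++ r.1, p.2 ++ r.2)))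
end

open Classical in
/-- The product of the dual noncommutative Connes-Kreimer algebra `H*_NCK`, on
coefficient functions of the basis `X_F`: it is dual to the admissible-cut coproduct. -/
noncomputable def conv (f g : List PlaneTree → ℤ) : List PlaneTree → ℤ :=
  fun F => ((cutsF F).map (fun p => f p.1 * g p.2)).sum

open Classical in
/-- Iterated product, with the unit (coefficients of `1 = X_∅`) as empty product. -/
noncomputable def convList (l : List (List PlaneTree → ℤ)) : List PlaneTree → ℤ :=
  l.foldr conv (fun F => if F = [] then 1 else 0)

open Classical in
/-- Coefficients of `S_n = Σ_{|F|=n} X_F` in the basis `X_F`. -/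
noncomputable def Sfun (n : ℕ) : List PlaneTree → ℤ :=
  fun F => if sizeF F = n then 1 else 0

open Classical in
/-- Coefficients of the series `Σ_{n≥0} (-1)^n X_{•ⁿ}` (sum over forests of isolated
vertices, with alternating signs). -/
noncomputable def lamSeries : List PlaneTree → ℤ :=
  fun F => if ∀ t ∈ F, t = PlaneTree.node [] then (-1) ^ F.length else 0

/-- Coefficients of the series `Σ_{n≥0} Σ_{|F|=n} X_F` (sum of all plane forests). -/
noncomputable def sigSeries : List PlaneTree → ℤ := fun _ => 1

open Classical in
/-- Coefficients of the unit `1 = X_∅`. -/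
noncomputable def unitSeries : List PlaneTree → ℤ := fun F => if F = [] then 1 else 0


lemma sizeT_pos (t : PlaneTree) : 0 < sizeT t := by
  cases t with
  | node ts => rw [sizeT]; omega

lemma lamSeries_append (a b : List PlaneTree) :
    lamSeries (a ++ b) = lamSeries a * lamSeries b := by
  by_cases ha : ∀ t ∈ a, t = PlaneTree.node []
  · by_cases hb : ∀ t ∈ b, t = PlaneTree.node []
    · have hab : ∀ t ∈ a ++ b, t = PlaneTree.node [] := by
        intro t ht
        rcases List.mem_append.1 ht with h | h
        exacts [ha t h, hb t h]
      simp only [lamSeries]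
      rw [if_pos hab, if_pos ha, if_pos hb, List.length_append, pow_add]
    · have hab : ¬ ∀ t ∈ a ++ b, t = PlaneTree.node [] :=
        fun h => hb fun t ht => h t (List.mem_append.2 (Or.inr ht))
      simp only [lamSeries]
      rw [if_neg hab, if_neg hb, mul_zero]
  · have hab : ¬ ∀ t ∈ a ++ b, t = PlaneTree.node [] :=
      fun h => ha fun t ht => h t (List.mem_append.2 (Or.inl ht))
    simp only [lamSeries]
    rw [if_neg hab, if_neg ha, zero_mul]

lemma sigSeries_append (a b : List PlaneTree) :
    sigSeries (a ++ b) = sigSeries a * sigSeries b := by simp [sigSeries]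

lemma unitSeries_append (a b : List PlaneTree) :
    unitSeries (a ++ b) = unitSeries a * unitSeries b := by
  simp only [unitSeries, List.append_eq_nil_iff]
  by_cases ha : a = [] <;> by_cases hb : b = [] <;> simp [ha, hb]

lemma sum_cuts_cons (f g : List PlaneTree → ℤ)
    (hf : ∀ a b, f (a ++ b) = f a * f b) (hg : ∀ a b, g (a ++ b) = g a * g b)
    (t : PlaneTree) (ts : List PlaneTree) :
    ((cutsF (t :: ts)).map fun p => f p.1 * g p.2).sum
      = ((cutsT t).map fun p => f p.1 * g p.2).sum
        * ((cutsF ts).map fun p => f p.1 * g p.2).sum := by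
  rw [cutsF]
  induction cutsT t with
  | nil => simp
  | cons a l ih =>
      rw [List.flatMap_cons, List.map_append, List.sum_append, ih, List.map_cons,
        List.sum_cons, add_mul, List.map_map]
      congr 1
      have : ((fun p => f p.1 * g p.2) ∘ fun r => (a.1 ++ r.1, a.2 ++ r.2))
          = fun (r : List PlaneTree × List PlaneTree) =>
            (f a.1 * g a.2) * (f r.1 * g r.2) := by
        funext r
        simp only [Function.comp, hf, hg]
        ring
      rw [this, List.sum_map_mul_left]

set_option linter.unreachableTactic false in
set_option linter.unusedTactic false in
mutual
theorem lemAT (t : PlaneTree) :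
    ((cutsT t).map fun p => lamSeries p.1 * sigSeries p.2).sum = 0 := by
  cases t with
  | node ts =>
      rw [cutsT, List.map_cons, List.sum_cons, List.map_map]
      have h1 : ((fun p => lamSeries p.1 * sigSeries p.2) ∘
          fun p => (p.1, [PlaneTree.node p.2]))
          = fun (p : List PlaneTree × List PlaneTree) =>
            lamSeries p.1 * sigSeries p.2 := by
        funext p; simp [Function.comp, sigSeries]
      rw [h1, lemAF ts]
      by_cases h : ts = [] <;>
        simp [h, lamSeries, sigSeries, unitSeries]
termination_by 2 * sizeT t
decreasing_by
  rw [sizeT]; omega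

theorem lemAF (F : List PlaneTree) :
    ((cutsF F).map fun p => lamSeries p.1 * sigSeries p.2).sum = unitSeries F := by
  cases F with
  | nil => simp [cutsF, lamSeries, sigSeries, unitSeries]
  | cons t ts =>
      rw [sum_cuts_cons _ _ lamSeries_append sigSeries_append, lemAT t, zero_mul]
      simp [unitSeries]
termination_by 2 * sizeF F + 1
decreasing_by
  all_goals rw [sizeF]
  all_goals first
    | omega
    | (rename_i t ts; have := sizeT_pos t; omega)
end

lemma lemCT (t : PlaneTree) :
    ((cutsT t).map fun p => sigSeries p.1 * unitSeries p.2).sum = 1 := by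
  cases t with
  | node ts =>
      rw [cutsT, List.map_cons, List.sum_cons, List.map_map]
      have h1 : ((fun p => sigSeries p.1 * unitSeries p.2) ∘
          fun p => (p.1, [PlaneTree.node p.2]))
          = fun (_ : List PlaneTree × List PlaneTree) => (0 : ℤ) := by
        funext p
        simp [Function.comp, sigSeries, unitSeries]
      rw [h1]
      simp [sigSeries, unitSeries]

lemma lemCF (F : List PlaneTree) :
    ((cutsF F).map fun p => sigSeries p.1 * unitSeries p.2).sum = 1 := by
  induction F with
  | nil => simp [cutsF, sigSeries, unitSeries]
  | cons t ts ih =>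
      rw [sum_cuts_cons _ _ sigSeries_append unitSeries_append, lemCT, ih, one_mul]

set_option linter.unreachableTactic false in
set_option linter.unusedTactic false in
mutual
theorem lemBT (t : PlaneTree) :
    ((cutsT t).map fun p => sigSeries p.1 * lamSeries p.2).sum = 0 := by
  cases t with
  | node ts =>
      rw [cutsT, List.map_cons, List.sum_cons, List.map_map]
      have h1 : ((fun p => sigSeries p.1 * lamSeries p.2) ∘
          fun p => (p.1, [PlaneTree.node p.2]))
          = fun (p : List PlaneTree × List PlaneTree) =>
            (-1) * (sigSeries p.1 * unitSeries p.2) := by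
        funext p
        by_cases h : p.2 = [] <;>
          simp [Function.comp, sigSeries, unitSeries, lamSeries, h]
      rw [h1, List.sum_map_mul_left, lemCF ts]
      simp [sigSeries, lamSeries]
termination_by 2 * sizeT t
decreasing_by
  rw [sizeT]; omega

theorem lemBF (F : List PlaneTree) :
    ((cutsF F).map fun p => sigSeries p.1 * lamSeries p.2).sum = unitSeries F := by
  cases F with
  | nil => simp [cutsF, sigSeries, lamSeries, unitSeries]
  | cons t ts =>
      rw [sum_cuts_cons _ _ sigSeries_append lamSeries_append, lemBT t, zero_mul]
      simp [unitSeries]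
termination_by 2 * sizeF F + 1
decreasing_by
  all_goals rw [sizeF]
  all_goals first
    | omega
    | (rename_i t ts; have := sizeT_pos t; omega)
end

/-- In the (completed) dual noncommutative Connes-Kreimer algebra, the inverse of the
series `Σ_{n≥0} (-1)^n X_{•ⁿ}` is `Σ_{n≥0} Σ_{|F|=n} X_F`: their products (in both
orders, computed by the admissible-cut dual product) equal the unit series. -/
theorem lam_inv_eq_sum_forests :
    conv lamSeries sigSeries = unitSeries ∧ conv sigSeries lamSeries = unitSeries := by
  constructor <;> funext F
  · exact lemAF F
  · exact lemBF F

end PlaneTree
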